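/- Let d ∈ M be ramified over A and let a ∈ A be a ramifier of d over A. Then for every a' ∈ A: Δ(a') < Δ(d − a) if and only if a' ∈ Stab(d/A); moreover Δ(a') ≠ Δ(d − a). (Thus the Archimedean class δ(d/A) := Δ(d − a) realizes over Δ(A) exactly the cut just above the Archimedean classes of elements of Stab(d/A).) -/

import Mathlib

/-- `c` and `d` realize the same cut over the subgroup `A`. -/
def SameCut {M : Type*} [AddCommGroup M] [LinearOrder M] [IsOrderedAddMonoid M] (A : AddSubgroup M) (c d : M) : Prop :=
  ∀ a ∈ A, ((a ≤ c ↔ a ≤ d) ∧ (c ≤ a ↔ d ≤ a))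

/-- `Stab(d/A)`: elements `a ∈ A` such that `d + a` and `d` realize the same cut over `A`. -/
def Stab {M : Type*} [AddCommGroup M] [LinearOrder M] [IsOrderedAddMonoid M] (A : AddSubgroup M) (d : M) : Set M :=
  {a | a ∈ A ∧ SameCut A (d + a) d}

open Classical in
/-- `G(d/A)`. -/
def Gset {M : Type*} [AddCommGroup M] [LinearOrder M] [IsOrderedAddMonoid M] (A : AddSubgroup M) (d : M) : Set M :=
  if d ∈ A then ({0} : Set M)
  else {x | ∀ a ∈ A, a ∉ Stab A d → (-|a| < x ∧ x < |a|)}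

/-- `H(d/A)`. -/
def Hset {M : Type*} [AddCommGroup M] [LinearOrder M] [IsOrderedAddMonoid M] (A : AddSubgroup M) (d : M) : Set M :=
  {x | ∃ a ∈ Stab A d, |x| ≤ |a|}

/-- `Δ(x) ≤ Δ(y)`: `|x| ≤ n • |y|` for some natural number `n`. -/
def DeltaLe {M : Type*} [AddCommGroup M] [LinearOrder M] [IsOrderedAddMonoid M] (x y : M) : Prop :=
  ∃ n : ℕ, |x| ≤ n • |y|

/-- `Δ(x) = Δ(y)`. -/
def DeltaEq {M : Type*} [AddCommGroup M] [LinearOrder M] [IsOrderedAddMonoid M] (x y : M) : Prop :=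
  DeltaLe x y ∧ DeltaLe y x

/-- `Δ(x) < Δ(y)`. -/
def DeltaLt {M : Type*} [AddCommGroup M] [LinearOrder M] [IsOrderedAddMonoid M] (x y : M) : Prop :=
  DeltaLe x y ∧ ¬ DeltaLe y x

/-- `Δ(x) ∈ Δ(A)`. -/
def DeltaMem {M : Type*} [AddCommGroup M] [LinearOrder M] [IsOrderedAddMonoid M] (x : M) (A : AddSubgroup M) : Prop :=
  ∃ a ∈ A, DeltaEq x a

/-- `a` is a ramifier of `d` over `A`: `a ∈ A` and `Δ(d − a) ∉ Δ(A)`. -/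
def IsRamifier {M : Type*} [AddCommGroup M] [LinearOrder M] [IsOrderedAddMonoid M] (A : AddSubgroup M) (d a : M) : Prop :=
  a ∈ A ∧ ¬ DeltaMem (d - a) A

/-- `d` is ramified over `A` if it admits a ramifier. -/
def Ramified {M : Type*} [AddCommGroup M] [LinearOrder M] [IsOrderedAddMonoid M] (A : AddSubgroup M) (d : M) : Prop :=
  ∃ a, IsRamifier A d a

/-- `d` is cut-independent from `B` over `A`: every closed interval with bounds in `B`
containing `d` contains a point of `A`. -/
def CutIndep {M : Type*} [AddCommGroup M] [LinearOrder M] [IsOrderedAddMonoid M] (A B : AddSubgroup M) (d : M) : Prop :=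
  ∀ b₁ ∈ B, ∀ b₂ ∈ B, b₁ ≤ d → d ≤ b₂ → ∃ a ∈ A, b₁ ≤ a ∧ a ≤ b₂

/-! Read `Δ` through Mathlib's `ArchimedeanClass.mk`, whose order is the reverse of `Δ`'s
(`DeltaLe x y ↔ mk y ≤ mk x`). A nonzero `a' ∈ A` stabilises `d` exactly when no point of `A`
lies between `d` and `d ± a'`. If `Δ(a') < Δ(d - a)` and some `c ∈ A` lay that close to `d`,
then `Δ(c - d) < Δ(d - a)` would force `Δ(c - a) = Δ(d - a)` with `c - a ∈ A`, contradicting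
ramification. Conversely a stabiliser satisfies `|a'| ≤ |d - a|`, i.e. `Δ(a') ≤ Δ(d - a)`, and
equality is excluded because `Δ(d - a) ∉ Δ(A)`. -/

open Set ArchimedeanClass

section Cut

variable {M : Type*} [AddCommGroup M] [LinearOrder M] [IsOrderedAddMonoid M]
  {A : AddSubgroup M} {x y c d a a' : M}

theorem SameCut.eq_of_mem_uIcc (h : SameCut A x y) (hc : c ∈ A) (hcxy : c ∈ uIcc x y) :
    x = y := by
  obtain ⟨hle, hge⟩ := h c hc
  rcases mem_uIcc.mp hcxy with ⟨h₁, h₂⟩ | ⟨h₁, h₂⟩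
  · exact le_antisymm (h₁.trans h₂) ((hge.mp h₁).trans (hle.mpr h₂))
  · exact le_antisymm ((hge.mpr h₁).trans (hle.mp h₂)) (h₁.trans h₂)

theorem sameCut_of_forall_notMem_uIcc (h : ∀ c ∈ A, c ∉ uIcc x y) : SameCut A x y := by
  intro c hc
  grind [mem_uIcc]

theorem SameCut.add_right (h : SameCut A x y) {b : M} (hb : b ∈ A) :
    SameCut A (x + b) (y + b) := by
  intro c hc
  simpa only [← sub_le_iff_le_add, le_sub_iff_add_le', add_comm b] using h (c - b) (sub_mem hc hb)

theorem mem_uIcc_sub_add_of_abs_sub_le (h : |d - c| ≤ |a'|) : c ∈ uIcc (d - a') (d + a') := by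
  have hIcc := mem_Icc_iff_abs_le.mp h
  rcases abs_choice a' with h' | h' <;> rw [h'] at hIcc
  · exact Icc_subset_uIcc hIcc
  · rw [sub_neg_eq_add, ← sub_eq_add_neg] at hIcc
    exact Icc_subset_uIcc' hIcc

theorem abs_le_abs_sub_of_mem_stab (ha' : a' ∈ Stab A d) (hc : c ∈ A) : |a'| ≤ |d - c| := by
  obtain ⟨ha'A, hcut⟩ := ha'
  have hcut' : SameCut A d (d - a') := by
    simpa [sub_eq_add_neg] using hcut.add_right (neg_mem ha'A)
  by_contra! h
  have ha'0 : a' = 0 := by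
    rcases uIcc_subset_uIcc_union_uIcc (b := d) (mem_uIcc_sub_add_of_abs_sub_le h.le) with h₁ | h₁
    · simpa using (hcut'.eq_of_mem_uIcc hc (by rwa [uIcc_comm])).symm
    · simpa using hcut.eq_of_mem_uIcc hc (by rwa [uIcc_comm])
  exact (abs_nonneg _).not_gt (by simpa [ha'0] using h)

end Cut

section Archimedean

variable {M : Type*} [AddCommGroup M] [LinearOrder M] [IsOrderedAddMonoid M]
  {A : AddSubgroup M} {x y b d a a' : M}

theorem deltaLe_iff_mk_le : DeltaLe x y ↔ mk y ≤ mk x := mk_le_mk.symm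

theorem deltaEq_iff_mk_eq : DeltaEq x y ↔ mk x = mk y := by
  rw [DeltaEq, deltaLe_iff_mk_le, deltaLe_iff_mk_le, le_antisymm_iff, and_comm]

theorem deltaLt_iff_mk_lt : DeltaLt x y ↔ mk y < mk x := by
  rw [DeltaLt, deltaLe_iff_mk_le, deltaLe_iff_mk_le, lt_iff_le_not_ge]

theorem IsRamifier.mk_ne (h : IsRamifier A d a) (hb : b ∈ A) : mk b ≠ mk (d - a) :=
  fun he => h.2 ⟨b, hb, deltaEq_iff_mk_eq.mpr he.symm⟩

theorem IsRamifier.mem_stab_of_mk_lt (h : IsRamifier A d a) (ha' : a' ∈ A)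
    (hlt : mk (d - a) < mk a') : a' ∈ Stab A d := by
  refine ⟨ha', sameCut_of_forall_notMem_uIcc fun c hc hcu => ?_⟩
  have hcd : mk (d - a) < mk (c - d) := by
    refine hlt.trans_le (mk_le_mk_of_abs ?_)
    simpa [abs_sub_comm] using abs_sub_right_of_mem_uIcc hcu
  apply h.mk_ne (sub_mem hc h.1)
  calc mk (c - a) = mk (d - a + (c - d)) := by rw [sub_add_sub_cancel']
    _ = mk (d - a) := mk_add_eq_mk_left hcd

theorem IsRamifier.mk_lt_of_mem_stab (h : IsRamifier A d a) (ha' : a' ∈ Stab A d) :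
    mk (d - a) < mk a' :=
  (mk_le_mk_of_abs (abs_le_abs_sub_of_mem_stab ha' h.1)).lt_of_ne (h.mk_ne ha'.1).symm

end Archimedean

theorem delta_lt_iff_mem_stab_of_ramifier_general (M : Type*) [AddCommGroup M] [LinearOrder M] [IsOrderedAddMonoid M]
    (A : AddSubgroup M)
    (d a : M) (hram : IsRamifier A d a) :
    ∀ a' ∈ A, (DeltaLt a' (d - a) ↔ a' ∈ Stab A d) ∧ ¬ DeltaEq a' (d - a) := by
  intro a' ha'
  refine ⟨⟨fun hlt => ?_, fun hst => ?_⟩, fun heq => ?_⟩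
  · exact hram.mem_stab_of_mk_lt ha' (deltaLt_iff_mk_lt.mp hlt)
  · exact deltaLt_iff_mk_lt.mpr (hram.mk_lt_of_mem_stab hst)
  · exact hram.mk_ne ha' (deltaEq_iff_mk_eq.mp heq)

/-- If `d` is ramified over `A` with ramifier `a`, then for every `a' ∈ A`:
`Δ(a') < Δ(d − a)` iff `a' ∈ Stab(d/A)`, and moreover `Δ(a') ≠ Δ(d − a)`. -/
theorem delta_lt_iff_mem_stab_of_ramifier (M : Type*) [AddCommGroup M] [LinearOrder M] [IsOrderedAddMonoid M]
    (hMdiv : ∀ x : M, ∀ n : ℕ, 0 < n → ∃ y : M, n • y = x)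
    (A : AddSubgroup M)
    (hAdiv : ∀ a ∈ A, ∀ n : ℕ, 0 < n → ∃ b ∈ A, n • b = a)
    (d a : M) (hram : IsRamifier A d a) :
    ∀ a' ∈ A, (DeltaLt a' (d - a) ↔ a' ∈ Stab A d) ∧ ¬ DeltaEq a' (d - a) :=
  delta_lt_iff_mem_stab_of_ramifier_general M A d a hram
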